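/- Let M > 2 be an integer and let Φ₁, …, Φ_M be nonnegative reals with Φ₁ + ⋯ + Φ_M = 1; set Φ_max = max{Φ₁, …, Φ_M}. Then there exists a subset A ⊆ {1, …, M} such that Σ_{m ∈ A} Φ_m ≥ (1 − Φ_max)/2 and Σ_{m ∉ A} Φ_m ≥ (1 − Φ_max)/2. -/

import Mathlib

open Finset

/-- Adding the elements of `s` one at a time, the partial sums rise by at most `c` per step, so
they cannot jump over the window `[t, t + c]`. -/
theorem Finset.exists_subset_sum_mem_Icc {ι α : Type*} [DecidableEq ι] [AddCommMonoid α]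
    [LinearOrder α] [IsOrderedCancelAddMonoid α] (s : Finset ι) (f : ι → α) {c t : α}
    (hf : ∀ i ∈ s, f i ≤ c) (hc : 0 ≤ t + c) (ht : t ≤ ∑ i ∈ s, f i) :
    ∃ A ⊆ s, ∑ i ∈ A, f i ∈ Set.Icc t (t + c) := by
  induction s using Finset.induction_on generalizing t with
  | empty => exact ⟨∅, subset_refl _, by simpa using ht, by simpa using hc⟩
  | insert a s ha ih =>
    by_cases hs : t ≤ ∑ i ∈ s, f i
    · obtain ⟨A, hAs, hA⟩ := ih (fun i hi => hf i (mem_insert_of_mem hi)) hc hs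
      exact ⟨A, hAs.trans (subset_insert a s), hA⟩
    · refine ⟨insert a s, subset_refl _, ht, ?_⟩
      rw [sum_insert ha, add_comm t]
      exact add_le_add (hf a (mem_insert_self a s)) (not_le.mp hs).le

theorem balanced_partition
    (M : ℕ) (Φ : Fin M → ℝ)
    (hsum : ∑ m, Φ m = 1)
    (Φmax : ℝ) (hΦmax : IsGreatest (Set.range Φ) Φmax) :
    ∃ A : Finset (Fin M),
      (1 - Φmax) / 2 ≤ ∑ m ∈ A, Φ m ∧ (1 - Φmax) / 2 ≤ ∑ m ∈ Aᶜ, Φ m := by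
  have hle : ∀ m, Φ m ≤ Φmax := fun m => hΦmax.2 ⟨m, rfl⟩
  obtain ⟨m, -, hm⟩ := exists_lt_of_sum_lt (s := univ) (f := 0) (g := Φ) (by simp [hsum])
  have hpos : 0 < Φmax := hm.trans_le (hle m)
  -- The window `[(1 - Φmax) / 2, (1 + Φmax) / 2]` is symmetric about `1 / 2`, so `Aᶜ` lands in it too.
  obtain ⟨A, -, hlow, hup⟩ := univ.exists_subset_sum_mem_Icc Φ (c := Φmax)
    (t := (1 - Φmax) / 2) (fun m _ => hle m) (by linarith) (by linarith)
  have hcompl := sum_add_sum_compl A Φ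
  exact ⟨A, hlow, by linarith⟩
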